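/- arXiv:2308.16674 — 7 statements merged into one kernel-verified Lean document; each statement's English description precedes it below -/
import Mathlib

section
/- Let V₁, V₂ be doubly commuting pure isometries on a Hilbert space H. Then H = ⊕_{(n₁,n₂) ∈ ℕ₀²} V₁^{n₁} V₂^{n₂}(W), where W = ker V₁* ∩ ker V₂* is a generating wandering subspace. -/
/-!
For an isometry `V`, the subspaces `V^n (ker V†)` are mutually orthogonal, and a vector `y`
orthogonal to all of them satisfies `V†^n y ∈ range V` for every `n`, hence
`y = V^n V†^n y → 0` when `V` is pure: this is the Wold decomposition of one pure isometry.
For a doubly commuting pair, `P = 1 - V₁ V₁†` (the projection onto `ker V₁†`) commutes with `V₂`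
and `V₂†`, so `V₂` restricts to a pure isometry of `ker V₁†` with wandering subspace `W`. Hence the
translates `V₂^n W` span `ker V₁†`, and then the translates `V₁^m V₂^n W` span `H`.
-/

open scoped InnerProductSpace
open Filter Topology
open scoped InnerProduct

namespace ContinuousLinearMap

theorem apply_eq_zero_of_commute {R M : Type*} [Semiring R] [TopologicalSpace M]
    [AddCommMonoid M] [Module R M] {A T : M →L[R] M} (h : Commute A T) {u : M} (hu : A u = 0) :
    A (T u) = 0 := by
  rw [← mul_apply_eq_comp, h.eq, mul_apply_eq_comp, hu, map_zero]

variable {𝕜 H : Type*} [RCLike 𝕜] [NormedAddCommGroup H] [InnerProductSpace 𝕜 H]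
  [CompleteSpace H]

theorem adjoint_pow (T : H →L[𝕜] H) (n : ℕ) : (T ^ n)† = T† ^ n := by
  simpa only [star_eq_adjoint] using star_pow T n

section Isometry

variable {V : H →L[𝕜] H}

theorem inner_pow_apply_pow_apply (hV : V† * V = 1) (n : ℕ) (x y : H) :
    ⟪(V ^ n) x, (V ^ n) y⟫_𝕜 = ⟪x, y⟫_𝕜 := by
  rw [← adjoint_inner_right, ← mul_apply_eq_comp, adjoint_pow, pow_mul_pow_eq_one n hV,
    one_apply_eq_self]

theorem inner_pow_apply_pow_apply_eq_zero_of_lt (hV : V† * V = 1) {x : H} (hx : (V†) x = 0)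
    (y : H) {m n : ℕ} (hmn : m < n) : ⟪(V ^ m) x, (V ^ n) y⟫_𝕜 = 0 := by
  obtain ⟨k, rfl⟩ := Nat.exists_eq_add_of_lt hmn
  rw [add_assoc, pow_add, mul_apply_eq_comp, inner_pow_apply_pow_apply hV, pow_succ',
    mul_apply_eq_comp, ← adjoint_inner_left, hx, inner_zero_left]

theorem inner_pow_apply_pow_apply_eq_zero_of_ne (hV : V† * V = 1) {x y : H} (hx : (V†) x = 0)
    (hy : (V†) y = 0) {m n : ℕ} (hmn : m ≠ n) : ⟪(V ^ m) x, (V ^ n) y⟫_𝕜 = 0 := by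
  rcases hmn.lt_or_gt with h | h
  · exact inner_pow_apply_pow_apply_eq_zero_of_lt hV hx y h
  · rw [← inner_conj_symm, inner_pow_apply_pow_apply_eq_zero_of_lt hV hy x h, map_zero]

theorem apply_adjoint_apply_eq_self (hV : V† * V = 1) {z : H}
    (hz : ∀ w, (V†) w = 0 → ⟪w, z⟫_𝕜 = 0) : V ((V†) z) = z := by
  set u := z - V ((V†) z)
  have hu : (V†) u = 0 := by
    rw [map_sub, ← mul_apply_eq_comp (V†), hV, one_apply_eq_self, sub_self]
  have : ⟪u, u⟫_𝕜 = 0 := by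
    rw [inner_sub_right, hz u hu, ← adjoint_inner_left, hu, inner_zero_left, sub_zero]
  exact (sub_eq_zero.1 (inner_self_eq_zero.1 this)).symm

theorem eq_zero_of_forall_inner_pow_apply_eq_zero (hV : V† * V = 1)
    (hpure : ∀ x, Tendsto (fun n => (V ^ n) ((V† ^ n) x)) atTop (𝓝 0)) {y : H}
    (hy : ∀ n w, (V†) w = 0 → ⟪(V ^ n) w, y⟫_𝕜 = 0) : y = 0 := by
  have hstep : ∀ n, V ((V† ^ (n + 1)) y) = (V† ^ n) y := fun n => by
    rw [pow_succ', mul_apply_eq_comp]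
    refine apply_adjoint_apply_eq_self hV fun w hw => ?_
    rw [← adjoint_pow, adjoint_inner_right]
    exact hy n w hw
  have hfix : ∀ n, (V ^ n) ((V† ^ n) y) = y := by
    intro n
    induction n with
    | zero => simp
    | succ n ih => rw [pow_succ, mul_apply_eq_comp, hstep, ih]
  exact tendsto_nhds_unique (by simpa only [hfix] using tendsto_const_nhds) (hpure y)

theorem adjoint_mul_one_sub_mul_adjoint (hV : V† * V = 1) : V† * (1 - V * V†) = 0 := by
  rw [mul_sub, mul_one, ← mul_assoc, hV, one_mul, sub_self]

end Isometry

section DoublyCommuting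

variable {V₁ V₂ : H →L[𝕜] H}

theorem inner_pow_pow_apply_eq_zero_of_ne (hV₁ : V₁† * V₁ = 1) (hV₂ : V₂† * V₂ = 1)
    (hdc : Commute (V₁†) V₂) {w w' : H} (hw₁ : (V₁†) w = 0) (hw₂ : (V₂†) w = 0)
    (hw₁' : (V₁†) w' = 0) (hw₂' : (V₂†) w' = 0) {p q : ℕ × ℕ} (hpq : p ≠ q) :
    ⟪(V₁ ^ p.1) ((V₂ ^ p.2) w), (V₁ ^ q.1) ((V₂ ^ q.2) w')⟫_𝕜 = 0 := by
  by_cases h₁ : p.1 = q.1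
  · rw [h₁, inner_pow_apply_pow_apply hV₁]
    exact inner_pow_apply_pow_apply_eq_zero_of_ne hV₂ hw₂ hw₂' fun h₂ => hpq (Prod.ext h₁ h₂)
  · exact inner_pow_apply_pow_apply_eq_zero_of_ne hV₁ (apply_eq_zero_of_commute
      (hdc.pow_right _) hw₁) (apply_eq_zero_of_commute (hdc.pow_right _) hw₁') h₁

theorem eq_zero_of_forall_inner_pow_pow_apply_eq_zero (hV₁ : V₁† * V₁ = 1)
    (hV₂ : V₂† * V₂ = 1) (hcomm : Commute V₁ V₂) (hdc : Commute (V₁†) V₂)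
    (hpure₁ : ∀ x, Tendsto (fun n => (V₁ ^ n) ((V₁† ^ n) x)) atTop (𝓝 0))
    (hpure₂ : ∀ x, Tendsto (fun n => (V₂ ^ n) ((V₂† ^ n) x)) atTop (𝓝 0)) {y : H}
    (hy : ∀ m n w, (V₁†) w = 0 → (V₂†) w = 0 → ⟪(V₁ ^ m) ((V₂ ^ n) w), y⟫_𝕜 = 0) : y = 0 := by
  set P := 1 - V₁ * V₁†
  have hP : IsSelfAdjoint P := (IsSelfAdjoint.one _).sub (IsSelfAdjoint.mul_star_self V₁)
  have hP_symm : ∀ u v, ⟪P u, v⟫_𝕜 = ⟪u, P v⟫_𝕜 := hP.isSymmetric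
  have hP_V₂ : Commute P V₂ := (Commute.one_left V₂).sub_left (hcomm.mul_left hdc)
  have hP_V₂adj : Commute P (V₂†) := by
    simpa only [hP.star_eq, star_eq_adjoint] using hP_V₂.star_star
  refine eq_zero_of_forall_inner_pow_apply_eq_zero hV₁ hpure₁ fun m u hu => ?_
  have hPz : P ((V₁† ^ m) y) = 0 := by
    refine eq_zero_of_forall_inner_pow_apply_eq_zero hV₂ hpure₂ fun n v hv => ?_
    rw [← hP_symm, ← mul_apply_eq_comp P, (hP_V₂.pow_right n).eq, mul_apply_eq_comp,
      ← adjoint_pow, adjoint_inner_right]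
    refine hy m n (P v) ?_ (apply_eq_zero_of_commute hP_V₂adj.symm hv)
    rw [← mul_apply_eq_comp, adjoint_mul_one_sub_mul_adjoint hV₁, zero_apply]
  have hPu : P u = u := by simp [P, hu]
  rw [← adjoint_inner_right, adjoint_pow, ← hPu, hP_symm, hPz, inner_zero_right]

end DoublyCommuting

end ContinuousLinearMap

open ContinuousLinearMap

/-- Słociński's Wold decomposition: for doubly commuting pure isometries,
`H = ⊕_{(n₁,n₂)} V₁^{n₁} V₂^{n₂}(W)` with `W = ker V₁* ∩ ker V₂*`. -/
theorem doubly_commuting_pure_isometries_wold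
    {H : Type*} [NormedAddCommGroup H] [InnerProductSpace ℂ H] [CompleteSpace H]
    (V₁ V₂ : H →L[ℂ] H) (hV₁ : ∀ x, ‖V₁ x‖ = ‖x‖) (hV₂ : ∀ x, ‖V₂ x‖ = ‖x‖)
    (hcomm : V₁.comp V₂ = V₂.comp V₁)
    (hdc : (ContinuousLinearMap.adjoint V₁).comp V₂
      = V₂.comp (ContinuousLinearMap.adjoint V₁))
    (hpure₁ : ∀ x : H, Tendsto (fun n : ℕ => (V₁ ^ n) ((ContinuousLinearMap.adjoint V₁ ^ n) x))
      atTop (𝓝 0))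
    (hpure₂ : ∀ x : H, Tendsto (fun n : ℕ => (V₂ ^ n) ((ContinuousLinearMap.adjoint V₂ ^ n) x))
      atTop (𝓝 0)) :
    let W := LinearMap.ker ((ContinuousLinearMap.adjoint V₁ : H →L[ℂ] H) : H →ₗ[ℂ] H) ⊓
      LinearMap.ker ((ContinuousLinearMap.adjoint V₂ : H →L[ℂ] H) : H →ₗ[ℂ] H)
    (⨆ p : ℕ × ℕ, W.map ((V₁ ^ p.1 * V₂ ^ p.2 : H →L[ℂ] H) : H →ₗ[ℂ] H)).topologicalClosure = ⊤ ∧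
    (∀ p q : ℕ × ℕ, p ≠ q → ∀ w ∈ W, ∀ w' ∈ W,
      ⟪(V₁ ^ p.1) ((V₂ ^ p.2) w), (V₁ ^ q.1) ((V₂ ^ q.2) w')⟫_ℂ = 0) := by
  intro W
  have hV₁' : V₁† * V₁ = 1 := (norm_map_iff_adjoint_comp_self V₁).1 hV₁
  have hV₂' : V₂† * V₂ = 1 := (norm_map_iff_adjoint_comp_self V₂).1 hV₂
  refine ⟨?_, fun p q hpq w hw w' hw' =>
    inner_pow_pow_apply_eq_zero_of_ne hV₁' hV₂' hdc hw.1 hw.2 hw'.1 hw'.2 hpq⟩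
  rw [Submodule.topologicalClosure_eq_top_iff, Submodule.eq_bot_iff]
  intro y hy
  refine eq_zero_of_forall_inner_pow_pow_apply_eq_zero hV₁' hV₂' hcomm hdc hpure₁ hpure₂
    fun m n w hw₁ hw₂ => (Submodule.mem_orthogonal _ y).1 hy _ ?_
  exact Submodule.mem_iSup_of_mem (m, n) ⟨w, ⟨hw₁, hw₂⟩, rfl⟩
end

section
/- Let V be an isometry on H and let T be a bounded operator commuting with V, i.e., TV = VT. If W = ker V*, then for every w ∈ W, Tw = ∑_{n≥0} Vⁿ P_W (V*)ⁿ T w, provided V is pure. -/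
open Filter Topology

/-!
For an isometry `V` the orthogonal projection onto `ker V*` is `1 - V V*`, so the `n`-th term
`Vⁿ P_W V*ⁿ x` equals `Vⁿ V*ⁿ x - Vⁿ⁺¹ V*ⁿ⁺¹ x` and the partial sums telescope to `x - Vᴺ V*ᴺ x`.
Purity says exactly that the remainder tends to `0`.
-/

namespace ContinuousLinearMap

variable {𝕜 E F : Type*} [RCLike 𝕜]
  [NormedAddCommGroup E] [InnerProductSpace 𝕜 E] [CompleteSpace E]
  [NormedAddCommGroup F] [InnerProductSpace 𝕜 F] [CompleteSpace F]

theorem orthogonalProjectionOnto_ker_adjoint_apply {V : E →L[𝕜] F} (hV : adjoint V ∘L V = 1)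
    [(LinearMap.ker (adjoint V : F →ₗ[𝕜] E)).HasOrthogonalProjection] (y : F) :
    ((LinearMap.ker (adjoint V : F →ₗ[𝕜] E)).orthogonalProjectionOnto y : F) =
      y - V (adjoint V y) := by
  have hmem : y - V (adjoint V y) ∈ LinearMap.ker (adjoint V : F →ₗ[𝕜] E) := by
    rw [LinearMap.mem_ker, coe_coe, map_sub, ← comp_apply, hV, one_apply_eq_self, sub_self]
  rw [← Submodule.starProjection_apply]
  refine Submodule.eq_starProjection_of_mem_of_inner_eq_zero hmem fun z hz => ?_
  rw [sub_sub_cancel, ← adjoint_inner_right, show adjoint V z = 0 from hz, inner_zero_right]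

theorem sum_pow_orthogonalProjectionOnto_ker_adjoint {V : E →L[𝕜] E} (hV : adjoint V ∘L V = 1)
    [(LinearMap.ker (adjoint V : E →ₗ[𝕜] E)).HasOrthogonalProjection] (x : E) (N : ℕ) :
    ∑ n ∈ Finset.range N, (V ^ n)
        ((LinearMap.ker (adjoint V : E →ₗ[𝕜] E)).orthogonalProjectionOnto
          ((adjoint V ^ n) x) : E) =
      x - (V ^ N) ((adjoint V ^ N) x) := by
  have hterm : ∀ n, (V ^ n)
      ((LinearMap.ker (adjoint V : E →ₗ[𝕜] E)).orthogonalProjectionOnto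
        ((adjoint V ^ n) x) : E) =
      (V ^ n) ((adjoint V ^ n) x) - (V ^ (n + 1)) ((adjoint V ^ (n + 1)) x) := by
    intro n
    rw [orthogonalProjectionOnto_ker_adjoint_apply hV, map_sub, pow_succ V, pow_succ' (adjoint V)]
    rfl
  simp only [hterm]
  rw [Finset.sum_range_sub']
  simp

theorem tendsto_sum_pow_orthogonalProjectionOnto_ker_adjoint {V : E →L[𝕜] E}
    (hV : adjoint V ∘L V = 1) [(LinearMap.ker (adjoint V : E →ₗ[𝕜] E)).HasOrthogonalProjection]
    {x : E} (hpure : Tendsto (fun n : ℕ => (V ^ n) ((adjoint V ^ n) x)) atTop (𝓝 0)) :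
    Tendsto (fun N : ℕ => ∑ n ∈ Finset.range N, (V ^ n)
        ((LinearMap.ker (adjoint V : E →ₗ[𝕜] E)).orthogonalProjectionOnto
          ((adjoint V ^ n) x) : E))
      atTop (𝓝 x) := by
  simp only [sum_pow_orthogonalProjectionOnto_ker_adjoint hV]
  simpa using tendsto_const_nhds.sub hpure

end ContinuousLinearMap

theorem commutant_expansion_on_wandering_subspace_general
    {H : Type*} [NormedAddCommGroup H] [InnerProductSpace ℂ H] [CompleteSpace H]
    (V : H →L[ℂ] H) (hV : ∀ x, ‖V x‖ = ‖x‖)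
    (hpure : ∀ x : H, Tendsto (fun n : ℕ => (V ^ n) ((ContinuousLinearMap.adjoint V ^ n) x))
      atTop (𝓝 0))
    (T : H →L[ℂ] H)
    (W : Submodule ℂ H) [Submodule.HasOrthogonalProjection W]
    (hW : W = LinearMap.ker (ContinuousLinearMap.adjoint V : H →ₗ[ℂ] H)) :
    ∀ w ∈ W,
      Tendsto (fun N : ℕ => ∑ n ∈ Finset.range N,
          (V ^ n) ((Submodule.orthogonalProjectionOnto W ((ContinuousLinearMap.adjoint V ^ n) (T w)) : H)))
        atTop (𝓝 (T w)) := by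
  intro w _
  subst hW
  exact ContinuousLinearMap.tendsto_sum_pow_orthogonalProjectionOnto_ker_adjoint
    (V.norm_map_iff_adjoint_comp_self.mp hV) (hpure (T w))

/-- For a pure isometry `V` and `T` commuting with `V`, every `w ∈ W = ker V*`
satisfies `T w = ∑ₙ Vⁿ P_W V*ⁿ T w`. -/
theorem commutant_expansion_on_wandering_subspace
    {H : Type*} [NormedAddCommGroup H] [InnerProductSpace ℂ H] [CompleteSpace H]
    (V : H →L[ℂ] H) (hV : ∀ x, ‖V x‖ = ‖x‖)
    (hpure : ∀ x : H, Tendsto (fun n : ℕ => (V ^ n) ((ContinuousLinearMap.adjoint V ^ n) x))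
      atTop (𝓝 0))
    (T : H →L[ℂ] H) (hT : T.comp V = V.comp T)
    (W : Submodule ℂ H) [Submodule.HasOrthogonalProjection W]
    (hW : W = LinearMap.ker (ContinuousLinearMap.adjoint V : H →ₗ[ℂ] H)) :
    ∀ w ∈ W,
      Tendsto (fun N : ℕ => ∑ n ∈ Finset.range N,
          (V ^ n) ((Submodule.orthogonalProjectionOnto W ((ContinuousLinearMap.adjoint V ^ n) (T w)) : H)))
        atTop (𝓝 (T w)) :=
  commutant_expansion_on_wandering_subspace_general V hV hpure T W hW
end

section
/- Let S be the unilateral shift on H = ℓ²(ℕ, K) and let T ∈ B(H) satisfy TS = ST. Then for the operator Θ := T|_K : K → H (where K is embedded as ker S*), one has T x = ∑_{n≥0} Sⁿ Θ P_K (S*)ⁿ x for every x ∈ H (convergence in norm), i.e., T is the multi-analytic operator M_Θ determined by Θ. -/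
/-!
Writing `S` for the shift, `Sⁿ` carries the `0`-th copy of `K` onto the `n`-th one, `(S*)ⁿ` reads
off the `n`-th coordinate into the `0`-th, and `P_K` keeps only the `0`-th coordinate. So
`Sⁿ Θ P_K (S*)ⁿ x = T Sⁿ (single 0 (x n)) = T (single n (x n))`, using that `T` commutes with `Sⁿ`.
The partial sums are thus `T` applied to the partial sums of the expansion
`x = ∑ₙ single n (x n)`, and converge to `T x` because `T` is continuous.
-/

open Filter Topology

namespace lp

section Coordinates

variable {E : Type*} [NormedAddCommGroup E] {p : ENNReal}

def IsUnilateralShift (S : lp (fun _ : ℕ => E) p → lp (fun _ : ℕ => E) p) : Prop :=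
  ∀ x, (S x) 0 = 0 ∧ ∀ n : ℕ, (S x) (n + 1) = x n

theorem eq_single_zero {x : lp (fun _ : ℕ => E) p} (hx : ∀ n : ℕ, n ≠ 0 → x n = 0) :
    x = lp.single p 0 (x 0) := by
  ext (_ | n)
  · rw [lp.single_apply_self]
  · rw [hx _ n.succ_ne_zero, lp.single_apply_ne _ _ _ n.succ_ne_zero]

variable {S : lp (fun _ : ℕ => E) p → lp (fun _ : ℕ => E) p}

theorem IsUnilateralShift.apply_single (hS : IsUnilateralShift S) (k : ℕ) (a : E) :
    S (lp.single p k a) = lp.single p (k + 1) a := by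
  ext (_ | m)
  · rw [(hS _).1, lp.single_apply_ne p _ _ (by omega)]
  · simp only [(hS _).2, lp.single_apply, Pi.single_apply, Nat.succ_inj]

theorem IsUnilateralShift.iterate_apply_single (hS : IsUnilateralShift S) (n k : ℕ) (a : E) :
    S^[n] (lp.single p k a) = lp.single p (k + n) a := by
  induction n with
  | zero => rfl
  | succ n ih => rw [Function.iterate_succ_apply', ih, hS.apply_single, add_assoc]

end Coordinates

section InnerProduct

variable {𝕜 E : Type*} [RCLike 𝕜] [NormedAddCommGroup E] [InnerProductSpace 𝕜 E]

section Adjoint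

variable [CompleteSpace E] {S : lp (fun _ : ℕ => E) 2 →L[𝕜] lp (fun _ : ℕ => E) 2}

theorem IsUnilateralShift.adjoint_apply (hS : IsUnilateralShift S) (y : lp (fun _ : ℕ => E) 2)
    (k : ℕ) : (S.adjoint y) k = y (k + 1) := by
  apply ext_inner_left 𝕜
  intro a
  rw [← lp.inner_single_left (𝕜 := 𝕜) k a (S.adjoint y),
    ← lp.inner_single_left (𝕜 := 𝕜) (k + 1) a y, ContinuousLinearMap.adjoint_inner_right,
    hS.apply_single]

theorem IsUnilateralShift.adjoint_pow_apply (hS : IsUnilateralShift S) (n : ℕ)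
    (y : lp (fun _ : ℕ => E) 2) (k : ℕ) : ((S.adjoint ^ n) y) k = y (k + n) := by
  induction n generalizing k with
  | zero => rfl
  | succ n ih =>
    rw [pow_succ', mul_apply_eq_comp, hS.adjoint_apply, ih, add_right_comm, add_assoc]

end Adjoint

theorem starProjection_eq_single_zero (K₀ : Submodule 𝕜 (lp (fun _ : ℕ => E) 2))
    [K₀.HasOrthogonalProjection] (hK₀ : ∀ x, x ∈ K₀ ↔ ∀ n : ℕ, n ≠ 0 → x n = 0)
    (y : lp (fun _ : ℕ => E) 2) : K₀.starProjection y = lp.single 2 0 (y 0) := by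
  refine Submodule.eq_starProjection_of_mem_of_inner_eq_zero
    ((hK₀ _).2 fun n hn => lp.single_apply_ne _ _ _ hn) fun w hw => ?_
  rw [eq_single_zero ((hK₀ w).1 hw), lp.inner_single_right]
  simp

end InnerProduct

end lp

/-- An operator `T` on `ℓ²(ℕ, K)` commuting with the unilateral shift `S` is the
multi-analytic operator determined by its restriction to `K ≅ ker S*`:
`T x = ∑ₙ Sⁿ Θ P_K S*ⁿ x`, where `Θ = T|_K`. -/
theorem commutant_of_shift_is_multi_analytic
    {K : Type*} [NormedAddCommGroup K] [InnerProductSpace ℂ K] [CompleteSpace K]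
    (S T : lp (fun _ : ℕ => K) 2 →L[ℂ] lp (fun _ : ℕ => K) 2)
    (hS : ∀ x : lp (fun _ : ℕ => K) 2, (S x) 0 = 0 ∧ ∀ n : ℕ, (S x) (n + 1) = x n)
    (hT : T.comp S = S.comp T)
    (K₀ : Submodule ℂ (lp (fun _ : ℕ => K) 2)) [K₀.HasOrthogonalProjection]
    (hK₀ : ∀ x : lp (fun _ : ℕ => K) 2, x ∈ K₀ ↔ ∀ n : ℕ, n ≠ 0 → x n = 0) :
    ∀ x : lp (fun _ : ℕ => K) 2,
      Tendsto (fun N : ℕ => ∑ n ∈ Finset.range N,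
          (S ^ n) (T ((K₀.orthogonalProjectionOnto
            ((ContinuousLinearMap.adjoint S ^ n) x) : lp (fun _ : ℕ => K) 2))))
        atTop (𝓝 (T x)) := by
  intro x
  have hshift : lp.IsUnilateralShift S := hS
  have hcomm (n : ℕ) (z : lp (fun _ : ℕ => K) 2) : (S ^ n) (T z) = T ((S ^ n) z) :=
    DFunLike.congr_fun ((show Commute S T from hT.symm).pow_left n).eq z
  have hterm (n : ℕ) : (S ^ n) (T (K₀.orthogonalProjectionOnto ((S.adjoint ^ n) x)))
      = T (lp.single 2 n (x n)) := by
    rw [← Submodule.starProjection_apply, lp.starProjection_eq_single_zero K₀ hK₀,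
      hshift.adjoint_pow_apply, zero_add, hcomm, FunLike.coe_pow_eq_iterate,
      hshift.iterate_apply_single, zero_add]
  simp only [hterm, ← map_sum]
  exact (T.continuous.tendsto x).comp (lp.hasSum_single ENNReal.ofNat_ne_top x).tendsto_sum_nat
end

section
/- Let V be a pure isometry on H₁, T a pure isometry on H₂, and Ψ : ker V* → H₂ a bounded operator. Define M_Ψ : H₁ → H₂ by M_Ψ x = ∑_{n≥0} Tⁿ Ψ P_W (V*)ⁿ x, where W = ker V* and P_W is the projection onto W, assuming this series converges to a bounded operator. Then M_Ψ V = T M_Ψ, i.e., M_Ψ intertwines V and T. -/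
open Filter Topology

/-- The multi-analytic operator `M_Ψ` built from `Ψ : ker V* → H₂` (via
`M_Ψ(Vⁿ w) = Tⁿ Ψ w`) intertwines the pure isometries `V` and `T`. -/
theorem multi_analytic_operator_intertwines
    {H₁ H₂ : Type*} [NormedAddCommGroup H₁] [InnerProductSpace ℂ H₁] [CompleteSpace H₁]
    [NormedAddCommGroup H₂] [InnerProductSpace ℂ H₂] [CompleteSpace H₂]
    (V : H₁ →L[ℂ] H₁) (hV : ∀ x, ‖V x‖ = ‖x‖)
    (hpureV : ∀ x : H₁, Tendsto (fun n : ℕ => (V ^ n) ((ContinuousLinearMap.adjoint V ^ n) x))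
      atTop (𝓝 0))
    (T : H₂ →L[ℂ] H₂) (hT : ∀ x, ‖T x‖ = ‖x‖)
    (hpureT : ∀ x : H₂, Tendsto (fun n : ℕ => (T ^ n) ((ContinuousLinearMap.adjoint T ^ n) x))
      atTop (𝓝 0))
    (Ψ : LinearMap.ker (ContinuousLinearMap.adjoint V : H₁ →ₗ[ℂ] H₁) →L[ℂ] H₂)
    (M : H₁ →L[ℂ] H₂)
    (hM : ∀ (n : ℕ) (w : LinearMap.ker (ContinuousLinearMap.adjoint V : H₁ →ₗ[ℂ] H₁)),
      M ((V ^ n) (w : H₁)) = (T ^ n) (Ψ w)) :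
    M.comp V = T.comp M := by
  set Vs := ContinuousLinearMap.adjoint V with hVs
  -- V* V = 1
  have hVV : Vs.comp V = 1 := V.norm_map_iff_adjoint_comp_self.mp hV
  have hVVx : ∀ x, Vs (V x) = x := fun x => by
    have := congrArg (fun f => f x) hVV; simpa using this
  set D : H₁ →L[ℂ] H₂ := M.comp V - T.comp M with hD
  have hDker : ∀ (n : ℕ) (w : LinearMap.ker (Vs : H₁ →ₗ[ℂ] H₁)), D ((V ^ n) (w : H₁)) = 0 := by
    intro n w
    have h1 : V ((V ^ n) (w : H₁)) = (V ^ (n + 1)) (w : H₁) := by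
      rw [pow_succ']; simp [ContinuousLinearMap.mul_apply]
    simp only [hD, ContinuousLinearMap.sub_apply, ContinuousLinearMap.comp_apply, h1, hM]
    rw [pow_succ']
    simp [ContinuousLinearMap.mul_apply]
  -- each x is limit of elements where D vanishes
  ext x
  have key : ∀ n : ℕ, D x = D ((V ^ n) ((Vs ^ n) x)) := by
    intro n
    induction n with
    | zero => simp
    | succ n ih =>
      have hw : (Vs ^ n) x - V (Vs ((Vs ^ n) x)) ∈ LinearMap.ker (Vs : H₁ →ₗ[ℂ] H₁) := by
        simp [LinearMap.mem_ker, hVVx]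
      have hz := hDker n ⟨_, hw⟩
      simp only [Submodule.coe_mk, map_sub] at hz
      have h2 : (V ^ n) (V (Vs ((Vs ^ n) x))) = (V ^ (n + 1)) ((Vs ^ (n + 1)) x) := by
        rw [pow_succ V n, pow_succ' Vs n]; simp [ContinuousLinearMap.mul_apply]
      have heq := sub_eq_zero.mp hz
      rw [ih, heq, h2]
  have hlim : Tendsto (fun n : ℕ => D ((V ^ n) ((Vs ^ n) x))) atTop (𝓝 (D 0)) :=
    (D.continuous.tendsto 0).comp (hpureV x)
  have : Tendsto (fun _ : ℕ => D x) atTop (𝓝 (D 0)) := by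
    simpa using hlim.congr (fun n => (key n).symm)
  have hDx : D x = D 0 := tendsto_const_nhds_iff.mp this
  have : D x = 0 := by simpa using hDx
  simpa [hD, sub_eq_zero] using this
end

section
/- Let V be a pure isometry on H₁ and T an isometry on H₂, W = ker V*, and Ψ : W → H₂ an isometry such that the intertwiner M_Ψ (given by M_Ψ(Vⁿw) = TⁿΨw) is bounded. Then M_Ψ is an isometry if and only if Ψ is an isometry and Ψ(W) is a wandering subspace for T, i.e., Ψ(W) ⊥ Tⁿ(Ψ(W)) for all n ≥ 1. -/
open scoped InnerProductSpace
open Filter Topology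

/-!
`W = ker V†` is wandering for `V`, so the orbit vectors satisfy
`⟪Vᵐ w, Vⁿ w'⟫ = δₘₙ ⟪w, w'⟫`; the condition on `Ψ` says precisely that the vectors
`Tᵐ Ψ w = M (Vᵐ w)` satisfy the same relations. Purity of `V` (the Wold decomposition) makes the
orbit span dense, so `M` preserves all inner products once it preserves those of the orbit.
-/

open ContinuousLinearMap Submodule

section InnerMap

variable {𝕜 E F : Type*} [RCLike 𝕜] [NormedAddCommGroup E] [InnerProductSpace 𝕜 E]
  [NormedAddCommGroup F] [InnerProductSpace 𝕜 F]

theorem ContinuousLinearMap.inner_map_map_of_dense_span (u : E →L[𝕜] F) {s : Set E}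
    (hs : Dense (span 𝕜 s : Set E)) (h : ∀ x ∈ s, ∀ y ∈ s, ⟪u x, u y⟫_𝕜 = ⟪x, y⟫_𝕜)
    (x y : E) : ⟪u x, u y⟫_𝕜 = ⟪x, y⟫_𝕜 := by
  have h_left : ∀ x ∈ s, ∀ y, ⟪u x, u y⟫_𝕜 = ⟪x, y⟫_𝕜 := fun x hx y =>
    congr($(ext_on hs (f := (innerSL 𝕜 (u x)).comp u) (g := innerSL 𝕜 x) (h x hx)) y)
  have h_right : ⟪u y, u x⟫_𝕜 = ⟪y, x⟫_𝕜 :=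
    congr($(ext_on hs (f := (innerSL 𝕜 (u y)).comp u) (g := innerSL 𝕜 y) fun x hx => by
      simpa [inner_conj_symm] using congr(starRingEnd 𝕜 $(h_left x hx y))) x)
  rw [← inner_conj_symm, h_right, inner_conj_symm]

theorem inner_pow_apply_pow_add_apply {A : E →L[𝕜] E} (hA : ∀ x, ‖A x‖ = ‖x‖)
    (m k : ℕ) (x y : E) : ⟪(A ^ m) x, (A ^ (m + k)) y⟫_𝕜 = ⟪x, (A ^ k) y⟫_𝕜 := by
  have hAm : ∀ x, ‖(A ^ m) x‖ = ‖x‖ := by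
    induction m with
    | zero => simp
    | succ m ih => intro x; rw [pow_succ', mul_apply_eq_comp, hA, ih]
  rw [pow_add, mul_apply_eq_comp, (LinearMap.norm_map_iff_inner_map_map (A ^ m)).mp hAm]

theorem inner_pow_apply_pow_apply_of_wandering {W : Type*} {A : E →L[𝕜] E}
    (hA : ∀ x, ‖A x‖ = ‖x‖) {f : W → E}
    (hf : ∀ k, 1 ≤ k → ∀ w w', ⟪f w, (A ^ k) (f w')⟫_𝕜 = 0) (m n : ℕ) (w w' : W) :
    ⟪(A ^ m) (f w), (A ^ n) (f w')⟫_𝕜 = if m = n then ⟪f w, f w'⟫_𝕜 else 0 := by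
  rcases lt_trichotomy m n with hmn | rfl | hnm
  · obtain ⟨k, rfl⟩ := Nat.exists_eq_add_of_lt hmn
    rw [if_neg hmn.ne, add_assoc, inner_pow_apply_pow_add_apply hA,
      hf _ le_add_self]
  · simpa using inner_pow_apply_pow_add_apply hA m 0 (f w) (f w')
  · obtain ⟨k, rfl⟩ := Nat.exists_eq_add_of_lt hnm
    rw [if_neg hnm.ne', ← inner_conj_symm, add_assoc,
      inner_pow_apply_pow_add_apply hA, hf _ le_add_self, map_zero]

end InnerMap

theorem sum_range_pow_apply_sub_apply {R E : Type*} [Semiring R] [TopologicalSpace E]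
    [AddCommGroup E] [Module R E] (A B : E →L[R] E) (x : E) (N : ℕ) :
    ∑ n ∈ Finset.range N, (A ^ n) ((B ^ n) x - A (B ((B ^ n) x))) = x - (A ^ N) ((B ^ N) x) := by
  have hstep : ∀ n, (A ^ n) ((B ^ n) x - A (B ((B ^ n) x)))
      = (A ^ n) ((B ^ n) x) - (A ^ (n + 1)) ((B ^ (n + 1)) x) := fun n => by
    rw [map_sub, pow_succ, mul_apply_eq_comp, pow_succ', mul_apply_eq_comp]
  simp_rw [hstep]
  simpa using Finset.sum_range_sub' (fun n => (A ^ n) ((B ^ n) x)) N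

section PureIsometry

variable {H : Type*} [NormedAddCommGroup H] [InnerProductSpace ℂ H] [CompleteSpace H]

theorem inner_pow_apply_eq_zero_of_mem_ker_adjoint (V : H →L[ℂ] H) {k : ℕ} (hk : 1 ≤ k)
    {w : H} (hw : w ∈ LinearMap.ker (adjoint V : H →ₗ[ℂ] H)) (y : H) :
    ⟪w, (V ^ k) y⟫_ℂ = 0 := by
  obtain ⟨m, rfl⟩ := Nat.exists_eq_add_of_le' hk
  rw [← adjoint_inner_left, ← star_eq_adjoint, star_pow, star_eq_adjoint, pow_succ,
    mul_apply_eq_comp, show adjoint V w = 0 from hw, map_zero, inner_zero_left]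

theorem sub_apply_adjoint_apply_mem_ker_adjoint {V : H →L[ℂ] H} (hV : ∀ x, ‖V x‖ = ‖x‖)
    (y : H) : y - V (adjoint V y) ∈ LinearMap.ker (adjoint V : H →ₗ[ℂ] H) := by
  have hVV : adjoint V ∘L V = 1 := (norm_map_iff_adjoint_comp_self V).mp hV
  simp only [LinearMap.mem_ker, coe_coe, map_sub]
  rw [← comp_apply, hVV, one_apply_eq_self, sub_self]

/-- The partial sums of the Wold decomposition `x = ∑ Vⁿ (1 - V V†) V†ⁿ x` tend to `x`. -/
theorem dense_span_pow_apply_ker_adjoint {V : H →L[ℂ] H} (hV : ∀ x, ‖V x‖ = ‖x‖)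
    (hpure : ∀ x : H, Tendsto (fun n : ℕ => (V ^ n) ((adjoint V ^ n) x)) atTop (𝓝 0)) :
    Dense (span ℂ (Set.range fun p : ℕ × LinearMap.ker (adjoint V : H →ₗ[ℂ] H) =>
      (V ^ p.1) (p.2 : H)) : Set H) := by
  refine fun x => mem_closure_of_tendsto (b := atTop) (f := fun N => ∑ n ∈ Finset.range N,
      (V ^ n) ((adjoint V ^ n) x - V (adjoint V ((adjoint V ^ n) x)))) ?_ ?_
  · simp_rw [sum_range_pow_apply_sub_apply]
    simpa using tendsto_const_nhds.sub (hpure x)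
  · refine Eventually.of_forall fun N => sum_mem fun n _ => subset_span ?_
    exact ⟨(n, ⟨_, sub_apply_adjoint_apply_mem_ker_adjoint hV _⟩), rfl⟩

end PureIsometry

/-- `M_Ψ` is an isometry iff `Ψ` is an isometry and `Ψ(W)` is a wandering
subspace for `T`. -/
theorem multi_analytic_isometry_iff
    {H₁ H₂ : Type*} [NormedAddCommGroup H₁] [InnerProductSpace ℂ H₁] [CompleteSpace H₁]
    [NormedAddCommGroup H₂] [InnerProductSpace ℂ H₂] [CompleteSpace H₂]
    (V : H₁ →L[ℂ] H₁) (hV : ∀ x, ‖V x‖ = ‖x‖)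
    (hpure : ∀ x : H₁, Tendsto (fun n : ℕ => (V ^ n) ((ContinuousLinearMap.adjoint V ^ n) x))
      atTop (𝓝 0))
    (T : H₂ →L[ℂ] H₂) (hT : ∀ x, ‖T x‖ = ‖x‖)
    (Ψ : LinearMap.ker (ContinuousLinearMap.adjoint V : H₁ →ₗ[ℂ] H₁) →L[ℂ] H₂)
    (M : H₁ →L[ℂ] H₂)
    (hM : ∀ (n : ℕ) (w : LinearMap.ker (ContinuousLinearMap.adjoint V : H₁ →ₗ[ℂ] H₁)),
      M ((V ^ n) (w : H₁)) = (T ^ n) (Ψ w)) :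
    (∀ x, ‖M x‖ = ‖x‖) ↔
      ((∀ w : LinearMap.ker (ContinuousLinearMap.adjoint V : H₁ →ₗ[ℂ] H₁), ‖Ψ w‖ = ‖w‖) ∧
       (∀ n : ℕ, 1 ≤ n → ∀ w w' : LinearMap.ker (ContinuousLinearMap.adjoint V : H₁ →ₗ[ℂ] H₁),
          ⟪Ψ w, (T ^ n) (Ψ w')⟫_ℂ = 0)) := by
  have hM₀ : ∀ w : LinearMap.ker (adjoint V : H₁ →ₗ[ℂ] H₁), M w = Ψ w := by simpa using hM 0
  constructor
  · intro hM_norm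
    refine ⟨fun w => by rw [← hM₀, hM_norm, coe_norm], fun n hn w w' => ?_⟩
    rw [← hM₀, ← hM, (LinearMap.norm_map_iff_inner_map_map M).mp hM_norm,
      inner_pow_apply_eq_zero_of_mem_ker_adjoint V hn w.2]
  · rintro ⟨hΨ, hwandering⟩
    have hΨi := (LinearMap.norm_map_iff_inner_map_map Ψ).mp hΨ
    refine (LinearMap.norm_map_iff_inner_map_map M).mpr <|
      M.inner_map_map_of_dense_span (dense_span_pow_apply_ker_adjoint hV hpure) ?_
    rintro _ ⟨⟨m, w⟩, rfl⟩ _ ⟨⟨n, w'⟩, rfl⟩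
    have hW := inner_pow_apply_pow_apply_of_wandering hV (f := Subtype.val)
      (fun k hk w w' => inner_pow_apply_eq_zero_of_mem_ker_adjoint V hk w.2 _) m n w w'
    simp only [hM, hW, inner_pow_apply_pow_apply_of_wandering hT hwandering, hΨi, coe_inner]
end

section
/- Let V₁, V₂ be doubly commuting isometries on H and let M be a closed subspace invariant under both V₁ and V₂ such that the restrictions V₁|_M, V₂|_M are also doubly commuting (i.e., V₁|_M* V₂|_M = V₂|_M V₁|_M* as operators on M). If moreover V₁|_M and V₂|_M are pure, then M = ⊕_{(n₁,n₂)∈ℕ₀²} V₁^{n₁}V₂^{n₂}(W_M), where W_M = (M ⊖ V₁(M)) ∩ (M ⊖ V₂(M)). -/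
open scoped InnerProductSpace
open Filter Topology

/-!
With `P = 1 - V₁V₁*` and `Q = 1 - V₂V₂*` the projections onto `ker V₁*` and `ker V₂*`, double
commutativity makes `P` and `Q` commute with the other operator and its adjoint, so `PQ` projects
onto `W = ker V₁* ∩ ker V₂*`. Telescoping `x - Vⁿ V*ⁿ x = ∑_{k<n} Vᵏ (1 - V V*) V*ᵏ x` and purity
give the Wold expansion `x = ∑ₖ Vᵏ (1 - V V*) V*ᵏ x` for each operator; nesting the two expansions
writes `x` through the vectors `V₁ⁿ V₂ᵐ (P Q V₁*ⁿ V₂*ᵐ x)` with `P Q (…) ∈ W`, so a vector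
orthogonal to all `V₁ⁿ V₂ᵐ W` vanishes. Orthogonality of the pieces is the usual wandering-subspace
computation: an isometry strips common powers, and a surplus power of `Vᵢ` meets `ker Vᵢ*`.
-/

namespace ContinuousLinearMap

variable {E : Type*} [NormedAddCommGroup E] [InnerProductSpace ℂ E] [CompleteSpace E]

noncomputable def wanderingSubspace (a b : E →L[ℂ] E) : Submodule ℂ E :=
  LinearMap.ker (adjoint a).toLinearMap ⊓ LinearMap.ker (adjoint b).toLinearMap

theorem mem_wanderingSubspace {a b : E →L[ℂ] E} {w : E} :
    w ∈ wanderingSubspace a b ↔ adjoint a w = 0 ∧ adjoint b w = 0 :=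
  Iff.rfl

section Isometry

variable {a : E →L[ℂ] E} (ha : adjoint a * a = 1)
include ha

theorem inner_pow_apply_pow_apply_of_adjoint_mul_self_eq_one (p : ℕ) (x y : E) :
    ⟪(a ^ p) x, (a ^ p) y⟫_ℂ = ⟪x, y⟫_ℂ := by
  induction p generalizing x y with
  | zero => simp
  | succ p ih =>
    rw [pow_succ, mul_apply_eq_comp, mul_apply_eq_comp, ih, ← adjoint_inner_left,
      ← mul_apply_eq_comp, ha, one_apply_eq_self]

theorem inner_pow_apply_pow_apply_eq_zero_of_lt_s15 {p q : ℕ} (hpq : p < q) {y : E}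
    (hy : adjoint a y = 0) (z : E) : ⟪(a ^ p) y, (a ^ q) z⟫_ℂ = 0 := by
  obtain ⟨d, rfl⟩ := Nat.exists_eq_add_of_lt hpq
  rw [add_assoc, pow_add, mul_apply_eq_comp,
    inner_pow_apply_pow_apply_of_adjoint_mul_self_eq_one ha, pow_succ',
    mul_apply_eq_comp, ← adjoint_inner_left, hy, inner_zero_left]

theorem inner_pow_apply_pow_apply_eq_zero_of_ne_s15 {p q : ℕ} (hpq : p ≠ q) {w w' : E}
    (hw : adjoint a w = 0) (hw' : adjoint a w' = 0) : ⟪(a ^ p) w, (a ^ q) w'⟫_ℂ = 0 := by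
  rcases hpq.lt_or_gt with h | h
  · exact inner_pow_apply_pow_apply_eq_zero_of_lt_s15 ha h hw w'
  · rw [← inner_conj_symm, inner_pow_apply_pow_apply_eq_zero_of_lt_s15 ha h hw' w, map_zero]

end Isometry

theorem inner_pow_apply_pow_apply_eq_zero_of_mem_wanderingSubspace {a b : E →L[ℂ] E}
    (ha : adjoint a * a = 1) (hb : adjoint b * b = 1) (hab' : Commute (adjoint a) b)
    {p q : ℕ × ℕ} (hpq : p ≠ q) {w w' : E} (hw : w ∈ wanderingSubspace a b)
    (hw' : w' ∈ wanderingSubspace a b) :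
    ⟪(a ^ p.1) ((b ^ p.2) w), (a ^ q.1) ((b ^ q.2) w')⟫_ℂ = 0 := by
  wlog hle : p.1 ≤ q.1 generalizing p q w w'
  · rw [← inner_conj_symm, this hpq.symm hw' hw (le_of_not_ge hle), map_zero]
  obtain ⟨hwa, hwb⟩ := mem_wanderingSubspace.1 hw
  rcases hle.lt_or_eq with hlt | heq
  · refine inner_pow_apply_pow_apply_eq_zero_of_lt_s15 ha hlt ?_ _
    rw [← mul_apply_eq_comp, (hab'.pow_right p.2).eq, mul_apply_eq_comp, hwa, map_zero]
  · rw [heq, inner_pow_apply_pow_apply_of_adjoint_mul_self_eq_one ha]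
    exact inner_pow_apply_pow_apply_eq_zero_of_ne_s15 hb (fun h => hpq (Prod.ext heq h)) hwb
      (mem_wanderingSubspace.1 hw').2

noncomputable def woldTerm (a : E →L[ℂ] E) (n : ℕ) : E →L[ℂ] E :=
  a ^ n * (1 - a * adjoint a) * adjoint a ^ n

theorem woldTerm_apply (a : E →L[ℂ] E) (n : ℕ) (y : E) :
    woldTerm a n y = (a ^ n) ((adjoint a ^ n) y) - (a ^ (n + 1)) ((adjoint a ^ (n + 1)) y) := by
  rw [woldTerm, pow_succ a, pow_succ' (adjoint a)]
  simp only [mul_apply_eq_comp, sub_apply, one_apply_eq_self, map_sub]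

theorem inner_eq_zero_of_forall_inner_woldTerm_apply_eq_zero (a : E →L[ℂ] E) {x y : E}
    (hpure : Tendsto (fun n : ℕ => (a ^ n) ((adjoint a ^ n) y)) atTop (𝓝 0))
    (horth : ∀ n : ℕ, ⟪woldTerm a n y, x⟫_ℂ = 0) : ⟪y, x⟫_ℂ = 0 := by
  have hconst : ∀ n : ℕ, ⟪(a ^ n) ((adjoint a ^ n) y), x⟫_ℂ = ⟪y, x⟫_ℂ := by
    intro n
    induction n with
    | zero => simp
    | succ n ih => rw [← ih, eq_comm, ← sub_eq_zero, ← inner_sub_left, ← woldTerm_apply, horth]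
  have hlim := hpure.inner (𝕜 := ℂ) (tendsto_const_nhds (x := x))
  simp only [hconst, inner_zero_left] at hlim
  exact tendsto_nhds_unique tendsto_const_nhds hlim

theorem adjoint_apply_one_sub_mul_adjoint_apply {a : E →L[ℂ] E} (ha : adjoint a * a = 1)
    (v : E) : adjoint a ((1 - a * adjoint a) v) = 0 := by
  rw [← mul_apply_eq_comp, mul_sub, mul_one, ← mul_assoc, ha, one_mul, sub_self, zero_apply]

section DoublyCommuting

variable {a b : E →L[ℂ] E} (hab : Commute a b) (hab' : Commute (adjoint a) b)
include hab hab'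

theorem woldTerm_mul_woldTerm (n m : ℕ) :
    woldTerm a n * woldTerm b m = a ^ n * b ^ m *
      ((1 - a * adjoint a) * (1 - b * adjoint b) * (adjoint a ^ n * adjoint b ^ m)) := by
  have hb'a' : Commute (adjoint b) (adjoint a) := hab.star_star.symm
  have hPb : Commute (1 - a * adjoint a) b := (Commute.one_left b).sub_left (hab.mul_left hab')
  have hQa' : Commute (1 - b * adjoint b) (adjoint a) :=
    (Commute.one_left _).sub_left (hab'.symm.mul_left hb'a')
  simp only [woldTerm, mul_assoc]
  rw [(hab'.pow_pow n m).left_comm, (hPb.pow_right m).left_comm,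
    (hQa'.symm.pow_left n).left_comm]

theorem one_sub_mul_adjoint_apply_one_sub_mul_adjoint_apply_mem_wanderingSubspace
    (ha : adjoint a * a = 1) (hb : adjoint b * b = 1) (z : E) :
    (1 - a * adjoint a) ((1 - b * adjoint b) z) ∈ wanderingSubspace a b := by
  have hab_star : Commute a (adjoint b) := by
    simpa only [star_eq_adjoint, adjoint_adjoint] using hab'.star_star
  have hb'P : Commute (adjoint b) (1 - a * adjoint a) :=
    (Commute.one_right _).sub_right (hab_star.symm.mul_right hab.star_star.symm)
  refine mem_wanderingSubspace.2 ⟨adjoint_apply_one_sub_mul_adjoint_apply ha _, ?_⟩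
  rw [← mul_apply_eq_comp, hb'P.eq, mul_apply_eq_comp, adjoint_apply_one_sub_mul_adjoint_apply hb,
    map_zero]

theorem topologicalClosure_iSup_map_wanderingSubspace_eq_top (ha : adjoint a * a = 1)
    (hb : adjoint b * b = 1)
    (hpa : ∀ x : E, Tendsto (fun n : ℕ => (a ^ n) ((adjoint a ^ n) x)) atTop (𝓝 0))
    (hpb : ∀ x : E, Tendsto (fun n : ℕ => (b ^ n) ((adjoint b ^ n) x)) atTop (𝓝 0)) :
    (⨆ p : ℕ × ℕ, (wanderingSubspace a b).map (a ^ p.1 * b ^ p.2).toLinearMap).topologicalClosure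
      = ⊤ := by
  rw [Submodule.topologicalClosure_eq_top_iff, Submodule.eq_bot_iff]
  intro x hx
  refine inner_self_eq_zero.mp
    (inner_eq_zero_of_forall_inner_woldTerm_apply_eq_zero b (hpb x) fun m => ?_)
  refine inner_eq_zero_of_forall_inner_woldTerm_apply_eq_zero a (hpa _) fun n => ?_
  rw [← mul_apply_eq_comp, woldTerm_mul_woldTerm hab hab', mul_apply_eq_comp]
  refine (Submodule.mem_orthogonal _ x).mp hx _ (Submodule.mem_iSup_of_mem (n, m) ⟨_, ?_, rfl⟩)
  simp only [mul_apply_eq_comp]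
  exact one_sub_mul_adjoint_apply_one_sub_mul_adjoint_apply_mem_wanderingSubspace hab hab' ha hb _

end DoublyCommuting

end ContinuousLinearMap

theorem doubly_commuting_invariant_subspace_decomposition_general
    {H : Type*} [NormedAddCommGroup H] [InnerProductSpace ℂ H]
    (V₁ V₂ : H →L[ℂ] H) (hV₁ : ∀ x, ‖V₁ x‖ = ‖x‖) (hV₂ : ∀ x, ‖V₂ x‖ = ‖x‖)
    (hcomm : V₁.comp V₂ = V₂.comp V₁)
    (M : Submodule ℂ H) [CompleteSpace M]
    (V₁M V₂M : M →L[ℂ] M)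
    (hV₁M : ∀ x : M, (V₁M x : H) = V₁ (x : H)) (hV₂M : ∀ x : M, (V₂M x : H) = V₂ (x : H))
    (hdcM : (ContinuousLinearMap.adjoint V₁M).comp V₂M
      = V₂M.comp (ContinuousLinearMap.adjoint V₁M))
    (hpure₁ : ∀ x : M, Tendsto
      (fun n : ℕ => (V₁M ^ n) ((ContinuousLinearMap.adjoint V₁M ^ n) x)) atTop (𝓝 0))
    (hpure₂ : ∀ x : M, Tendsto
      (fun n : ℕ => (V₂M ^ n) ((ContinuousLinearMap.adjoint V₂M ^ n) x)) atTop (𝓝 0)) :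
    let W_M := LinearMap.ker (ContinuousLinearMap.adjoint V₁M).toLinearMap ⊓
      LinearMap.ker (ContinuousLinearMap.adjoint V₂M).toLinearMap
    (⨆ p : ℕ × ℕ, W_M.map (V₁M ^ p.1 * V₂M ^ p.2).toLinearMap).topologicalClosure = ⊤ ∧
    (∀ p q : ℕ × ℕ, p ≠ q → ∀ w ∈ W_M, ∀ w' ∈ W_M,
      ⟪(V₁M ^ p.1) ((V₂M ^ p.2) w), (V₁M ^ q.1) ((V₂M ^ q.2) w')⟫_ℂ = 0) := by
  have hiso : ∀ {V : H →L[ℂ] H} {VM : M →L[ℂ] M}, (∀ x, ‖V x‖ = ‖x‖) →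
      (∀ x : M, (VM x : H) = V x) → ContinuousLinearMap.adjoint VM * VM = 1 := fun hV hVM =>
    (ContinuousLinearMap.norm_map_iff_adjoint_comp_self _).mp fun x => by
      rw [Submodule.coe_norm, hVM, hV, ← Submodule.coe_norm]
  have hcommM : Commute V₁M V₂M := by
    ext x
    simp only [mul_apply_eq_comp, hV₁M, hV₂M]
    exact DFunLike.congr_fun hcomm (x : H)
  have h₁ := hiso hV₁ hV₁M
  have h₂ := hiso hV₂ hV₂M
  exact ⟨ContinuousLinearMap.topologicalClosure_iSup_map_wanderingSubspace_eq_top hcommM hdcM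
      h₁ h₂ hpure₁ hpure₂, fun _ _ hpq _ hw _ hw' =>
    ContinuousLinearMap.inner_pow_apply_pow_apply_eq_zero_of_mem_wanderingSubspace h₁ h₂ hdcM
      hpq hw hw'⟩

/-- If the restrictions of doubly commuting isometries to an invariant subspace
`M` are doubly commuting and pure, then `M = ⊕_{(n₁,n₂)} V₁^{n₁}V₂^{n₂}(W_M)`. -/
theorem doubly_commuting_invariant_subspace_decomposition
    {H : Type*} [NormedAddCommGroup H] [InnerProductSpace ℂ H] [CompleteSpace H]
    (V₁ V₂ : H →L[ℂ] H) (hV₁ : ∀ x, ‖V₁ x‖ = ‖x‖) (hV₂ : ∀ x, ‖V₂ x‖ = ‖x‖)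
    (hcomm : V₁.comp V₂ = V₂.comp V₁)
    (hdc : (ContinuousLinearMap.adjoint V₁).comp V₂
      = V₂.comp (ContinuousLinearMap.adjoint V₁))
    (M : Submodule ℂ H) [CompleteSpace M]
    (hM₁ : ∀ x ∈ M, V₁ x ∈ M) (hM₂ : ∀ x ∈ M, V₂ x ∈ M)
    (V₁M V₂M : M →L[ℂ] M)
    (hV₁M : ∀ x : M, (V₁M x : H) = V₁ (x : H)) (hV₂M : ∀ x : M, (V₂M x : H) = V₂ (x : H))
    (hdcM : (ContinuousLinearMap.adjoint V₁M).comp V₂M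
      = V₂M.comp (ContinuousLinearMap.adjoint V₁M))
    (hpure₁ : ∀ x : M, Tendsto
      (fun n : ℕ => (V₁M ^ n) ((ContinuousLinearMap.adjoint V₁M ^ n) x)) atTop (𝓝 0))
    (hpure₂ : ∀ x : M, Tendsto
      (fun n : ℕ => (V₂M ^ n) ((ContinuousLinearMap.adjoint V₂M ^ n) x)) atTop (𝓝 0)) :
    let W_M := LinearMap.ker (ContinuousLinearMap.adjoint V₁M).toLinearMap ⊓
      LinearMap.ker (ContinuousLinearMap.adjoint V₂M).toLinearMap
    (⨆ p : ℕ × ℕ, W_M.map (V₁M ^ p.1 * V₂M ^ p.2).toLinearMap).topologicalClosure = ⊤ ∧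
    (∀ p q : ℕ × ℕ, p ≠ q → ∀ w ∈ W_M, ∀ w' ∈ W_M,
      ⟪(V₁M ^ p.1) ((V₂M ^ p.2) w), (V₁M ^ q.1) ((V₂M ^ q.2) w')⟫_ℂ = 0) :=
  doubly_commuting_invariant_subspace_decomposition_general V₁ V₂ hV₁ hV₂ hcomm M V₁M V₂M hV₁M hV₂M
    hdcM hpure₁ hpure₂
end

section
/- Let S be the unilateral shift on H = ℓ²(ℕ, K), and let M₁ = M_{Ψ₁}(ℓ²(ℕ, W₁)) and M₂ = M_{Ψ₂}(ℓ²(ℕ, W₂)) be S-invariant subspaces given by isometric multi-analytic operators M_{Ψ₁}, M_{Ψ₂} (intertwining the respective shifts with S). Then M₁ ⊆ M₂ if and only if there is an isometric multi-analytic operator M_Ψ : ℓ²(ℕ, W₁) → ℓ²(ℕ, W₂) (intertwining the shifts) with M_{Ψ₁} = M_{Ψ₂} M_Ψ; in that case Ψ = M_{Ψ₂}* M_{Ψ₁}|_{W₁}. -/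
/-!
Everything follows from `V† V = 1` for an isometry `V`. If `range A₁ ⊆ range A₂` then `A₂ A₂†`,
the projection onto `range A₂`, fixes `A₁`, so `A := A₂† A₁` satisfies `A₂ A = A₁`; hence `A` is
isometric, and `A S₁ = A₂† S A₂ A = A₂† A₂ S₂ A = S₂ A`. The converse is immediate.
-/

open ContinuousLinearMap

section IsometryFactorization

variable {𝕜 E F G : Type*} [RCLike 𝕜]
  [NormedAddCommGroup E] [NormedSpace 𝕜 E]
  [NormedAddCommGroup F] [InnerProductSpace 𝕜 F] [CompleteSpace F]
  [NormedAddCommGroup G] [InnerProductSpace 𝕜 G] [CompleteSpace G]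
  {V : F →L[𝕜] G} {T : E →L[𝕜] G}

theorem adjoint_apply_apply_of_isometry (hV : ∀ x, ‖V x‖ = ‖x‖) (y : F) :
    adjoint V (V y) = y := by
  rw [← comp_apply, (norm_map_iff_adjoint_comp_self V).mp hV, one_apply_eq_self]

theorem comp_adjoint_comp_of_range_subset (hV : ∀ x, ‖V x‖ = ‖x‖)
    (hT : Set.range T ⊆ Set.range V) : V ∘L (adjoint V ∘L T) = T := by
  ext x
  obtain ⟨y, hy⟩ := hT ⟨x, rfl⟩
  simp only [comp_apply, ← hy, adjoint_apply_apply_of_isometry hV]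

theorem norm_adjoint_comp_apply_of_range_subset (hV : ∀ x, ‖V x‖ = ‖x‖)
    (hT : Set.range T ⊆ Set.range V) (hTiso : ∀ x, ‖T x‖ = ‖x‖) (x : E) :
    ‖(adjoint V ∘L T) x‖ = ‖x‖ := by
  rw [← hV, ← comp_apply V, comp_adjoint_comp_of_range_subset hV hT, hTiso]

theorem adjoint_comp_comp_intertwining_of_range_subset (hV : ∀ x, ‖V x‖ = ‖x‖)
    (hT : Set.range T ⊆ Set.range V) {S : G →L[𝕜] G} {S₁ : E →L[𝕜] E} {S₂ : F →L[𝕜] F}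
    (hTS : T ∘L S₁ = S ∘L T) (hVS : V ∘L S₂ = S ∘L V) :
    (adjoint V ∘L T) ∘L S₁ = S₂ ∘L (adjoint V ∘L T) := by
  ext x
  have hfactor := congrArg (· x) (comp_adjoint_comp_of_range_subset hV hT)
  have hTx := congrArg (· x) hTS
  have hVx := congrArg (· ((adjoint V ∘L T) x)) hVS
  simp only [comp_apply] at hfactor hTx hVx ⊢
  calc adjoint V (T (S₁ x)) = adjoint V (S (V (adjoint V (T x)))) := by rw [hTx, hfactor]
    _ = adjoint V (V (S₂ (adjoint V (T x)))) := by rw [hVx]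
    _ = S₂ (adjoint V (T x)) := adjoint_apply_apply_of_isometry hV _

end IsometryFactorization

theorem nested_invariant_subspaces_shift_general
    {K W₁ W₂ : Type*}
    [NormedAddCommGroup K] [InnerProductSpace ℂ K] [CompleteSpace K]
    [NormedAddCommGroup W₁] [InnerProductSpace ℂ W₁] [CompleteSpace W₁]
    [NormedAddCommGroup W₂] [InnerProductSpace ℂ W₂] [CompleteSpace W₂]
    (S : lp (fun _ : ℕ => K) 2 →L[ℂ] lp (fun _ : ℕ => K) 2)
    (S₁ : lp (fun _ : ℕ => W₁) 2 →L[ℂ] lp (fun _ : ℕ => W₁) 2)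
    (S₂ : lp (fun _ : ℕ => W₂) 2 →L[ℂ] lp (fun _ : ℕ => W₂) 2)
    (A₁ : lp (fun _ : ℕ => W₁) 2 →L[ℂ] lp (fun _ : ℕ => K) 2)
    (hA₁iso : ∀ x, ‖A₁ x‖ = ‖x‖) (hA₁ : A₁.comp S₁ = S.comp A₁)
    (A₂ : lp (fun _ : ℕ => W₂) 2 →L[ℂ] lp (fun _ : ℕ => K) 2)
    (hA₂iso : ∀ x, ‖A₂ x‖ = ‖x‖) (hA₂ : A₂.comp S₂ = S.comp A₂) :
    Set.range A₁ ⊆ Set.range A₂ ↔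
      ∃ A : lp (fun _ : ℕ => W₁) 2 →L[ℂ] lp (fun _ : ℕ => W₂) 2,
        (∀ x, ‖A x‖ = ‖x‖) ∧ A.comp S₁ = S₂.comp A ∧ A₁ = A₂.comp A ∧
        A = (ContinuousLinearMap.adjoint A₂).comp A₁ := by
  constructor
  · intro hsub
    exact ⟨adjoint A₂ ∘L A₁,
      norm_adjoint_comp_apply_of_range_subset hA₂iso hsub hA₁iso,
      adjoint_comp_comp_intertwining_of_range_subset hA₂iso hsub hA₁ hA₂,
      (comp_adjoint_comp_of_range_subset hA₂iso hsub).symm, rfl⟩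
  · rintro ⟨A, -, -, rfl, -⟩
    exact Set.range_comp_subset_range A A₂

/-- Nested invariant subspaces: for `S`-invariant subspaces
`M₁ = M_{Ψ₁}(ℓ²(ℕ,W₁))`, `M₂ = M_{Ψ₂}(ℓ²(ℕ,W₂))` given by isometric
multi-analytic operators, `M₁ ⊆ M₂` iff `M_{Ψ₁} = M_{Ψ₂} M_Ψ` for an isometric
multi-analytic `M_Ψ`; in that case `M_Ψ = M_{Ψ₂}* M_{Ψ₁}`. -/
theorem nested_invariant_subspaces_shift
    {K W₁ W₂ : Type*}
    [NormedAddCommGroup K] [InnerProductSpace ℂ K] [CompleteSpace K]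
    [NormedAddCommGroup W₁] [InnerProductSpace ℂ W₁] [CompleteSpace W₁]
    [NormedAddCommGroup W₂] [InnerProductSpace ℂ W₂] [CompleteSpace W₂]
    (S : lp (fun _ : ℕ => K) 2 →L[ℂ] lp (fun _ : ℕ => K) 2)
    (hS : ∀ x : lp (fun _ : ℕ => K) 2, (S x) 0 = 0 ∧ ∀ n : ℕ, (S x) (n + 1) = x n)
    (S₁ : lp (fun _ : ℕ => W₁) 2 →L[ℂ] lp (fun _ : ℕ => W₁) 2)
    (hS₁ : ∀ x : lp (fun _ : ℕ => W₁) 2, (S₁ x) 0 = 0 ∧ ∀ n : ℕ, (S₁ x) (n + 1) = x n)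
    (S₂ : lp (fun _ : ℕ => W₂) 2 →L[ℂ] lp (fun _ : ℕ => W₂) 2)
    (hS₂ : ∀ x : lp (fun _ : ℕ => W₂) 2, (S₂ x) 0 = 0 ∧ ∀ n : ℕ, (S₂ x) (n + 1) = x n)
    (A₁ : lp (fun _ : ℕ => W₁) 2 →L[ℂ] lp (fun _ : ℕ => K) 2)
    (hA₁iso : ∀ x, ‖A₁ x‖ = ‖x‖) (hA₁ : A₁.comp S₁ = S.comp A₁)
    (A₂ : lp (fun _ : ℕ => W₂) 2 →L[ℂ] lp (fun _ : ℕ => K) 2)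
    (hA₂iso : ∀ x, ‖A₂ x‖ = ‖x‖) (hA₂ : A₂.comp S₂ = S.comp A₂) :
    Set.range A₁ ⊆ Set.range A₂ ↔
      ∃ A : lp (fun _ : ℕ => W₁) 2 →L[ℂ] lp (fun _ : ℕ => W₂) 2,
        (∀ x, ‖A x‖ = ‖x‖) ∧ A.comp S₁ = S₂.comp A ∧ A₁ = A₂.comp A ∧
        A = (ContinuousLinearMap.adjoint A₂).comp A₁ :=
  nested_invariant_subspaces_shift_general S S₁ S₂ A₁ hA₁iso hA₁ A₂ hA₂iso hA₂
end
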